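/- Let X be standard normal and for ε > 0 define Y = −ε·1_{X ∈ (0,ε)} + ε·1_{X ∈ (−ε−δ, −ε)}, where δ > 0 is chosen so that P(X ∈ (0,ε)) = P(X ∈ (−ε−δ, −ε)). Then E[Y] = 0, Var[Y] = 2ε²·P(X ∈ (0,ε)) ≤ √(2/π)·ε³, and d_K(X+Y, N) ≥ P(X ∈ (0,ε)) ≥ ε·e^{−ε²/2}/√(2π) ≥ (e^{−ε²/2}/(4π)^{1/3})·(Var[Y])^{1/3}. Hence the exponent 1/3 in the bound d_K(X+Y,N) ≤ d_K(X,N) + (4/3)(Var[Y])^{1/3} is optimal. -/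

import Mathlib

open MeasureTheory ProbabilityTheory

/-- Kolmogorov distance between (the laws of) two real random variables. -/
noncomputable def dK {Ω : Type*} [MeasurableSpace Ω] (μ : Measure Ω) (X Y : Ω → ℝ) : ℝ :=
  ⨆ t : ℝ, |(μ {ω | X ω ≤ t}).toReal - (μ {ω | Y ω ≤ t}).toReal|

/-
Y moves the mass of X on (0, ε) down by ε and the equal mass on (-ε - δ, -ε) up by ε, so it is
centred with variance 2ε²p, where p = P(0 < X < ε). Every point with X < ε lands at or below 0,
so P(X + Y ≤ 0) ≥ P(X ≤ 0) + p = P(N ≤ 0) + p, i.e. d_K(X + Y, N) ≥ p. On (0, ε) the Gaussian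
density lies between e^{-ε²/2}/√(2π) and 1/√(2π), so p is of order ε while Var Y is of order ε³.
-/

open Set Real

lemma sq_neg_indicator_add_indicator {Ω : Type*} {A B : Set Ω} (a : ℝ) (hAB : Disjoint A B)
    (ω : Ω) :
    ((-a) * A.indicator (fun _ => (1 : ℝ)) ω + a * B.indicator (fun _ => (1 : ℝ)) ω) ^ 2
      = a ^ 2 * A.indicator (fun _ => (1 : ℝ)) ω + a ^ 2 * B.indicator (fun _ => (1 : ℝ)) ω := by
  by_cases hωA : ω ∈ A
  · simp [hωA, Set.disjoint_left.mp hAB hωA]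
  · by_cases hωB : ω ∈ B <;> simp [hωA, hωB]

section ShiftOnDisjointSets

variable {Ω : Type*} [MeasurableSpace Ω] {μ : Measure Ω} [IsFiniteMeasure μ] {A B : Set Ω}

lemma integral_mul_indicator_add_mul_indicator (a b : ℝ) (hA : NullMeasurableSet A μ)
    (hB : NullMeasurableSet B μ) :
    ∫ ω, a * A.indicator (fun _ => (1 : ℝ)) ω + b * B.indicator (fun _ => (1 : ℝ)) ω ∂μ
      = a * μ.real A + b * μ.real B := by
  rw [integral_add (((integrable_const 1).indicator₀ hA).const_mul _)
      (((integrable_const 1).indicator₀ hB).const_mul _),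
    integral_const_mul, integral_const_mul, integral_indicator₀ hA, integral_indicator₀ hB,
    setIntegral_const, setIntegral_const, smul_eq_mul, smul_eq_mul, mul_one, mul_one]

lemma integral_neg_indicator_add_indicator (a : ℝ) (hA : NullMeasurableSet A μ)
    (hB : NullMeasurableSet B μ) (hAB : μ A = μ B) :
    ∫ ω, (-a) * A.indicator (fun _ => (1 : ℝ)) ω + a * B.indicator (fun _ => (1 : ℝ)) ω ∂μ
      = 0 := by
  rw [integral_mul_indicator_add_mul_indicator _ _ hA hB, measureReal_def, measureReal_def, hAB]
  ring

lemma variance_neg_indicator_add_indicator (a : ℝ) (hA : NullMeasurableSet A μ)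
    (hB : NullMeasurableSet B μ) (hdisj : Disjoint A B) (hAB : μ A = μ B) :
    variance (fun ω => (-a) * A.indicator (fun _ => (1 : ℝ)) ω
        + a * B.indicator (fun _ => (1 : ℝ)) ω) μ = 2 * a ^ 2 * μ.real A := by
  have hmeas : AEMeasurable (fun ω => (-a) * A.indicator (fun _ => (1 : ℝ)) ω
      + a * B.indicator (fun _ => (1 : ℝ)) ω) μ :=
    ((aemeasurable_const.indicator₀ hA).const_mul _).add
      ((aemeasurable_const.indicator₀ hB).const_mul _)
  rw [variance_of_integral_eq_zero hmeas (integral_neg_indicator_add_indicator a hA hB hAB)]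
  simp_rw [sq_neg_indicator_add_indicator a hdisj]
  rw [integral_mul_indicator_add_mul_indicator _ _ hA hB, measureReal_def, measureReal_def, hAB]
  ring

end ShiftOnDisjointSets

lemma gaussianPDFReal_zero_one (x : ℝ) :
    gaussianPDFReal 0 1 x = exp (-x ^ 2 / 2) / √(2 * π) := by
  simp [gaussianPDFReal, div_eq_inv_mul]

lemma gaussianReal_real_eq_setIntegral (s : Set ℝ) :
    (gaussianReal 0 1).real s = ∫ x in s, gaussianPDFReal 0 1 x := by
  rw [measureReal_def, gaussianReal_apply_eq_integral _ one_ne_zero,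
    ENNReal.toReal_ofReal (integral_nonneg (gaussianPDFReal_nonneg 0 1))]

lemma gaussianReal_real_Ioo_le {a b : ℝ} (hab : a ≤ b) :
    (gaussianReal 0 1).real (Ioo a b) ≤ (b - a) / √(2 * π) := by
  have hpdf_le : ∀ x ∈ Ioo a b, ‖gaussianPDFReal 0 1 x‖ ≤ 1 / √(2 * π) := fun x _ => by
    rw [Real.norm_of_nonneg (gaussianPDFReal_nonneg 0 1 x), gaussianPDFReal_zero_one]
    gcongr
    exact exp_le_one_iff.mpr (by nlinarith [sq_nonneg x])
  calc (gaussianReal 0 1).real (Ioo a b)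
      ≤ ‖∫ x in Ioo a b, gaussianPDFReal 0 1 x‖ := by
        rw [gaussianReal_real_eq_setIntegral]; exact le_norm_self _
    _ ≤ 1 / √(2 * π) * volume.real (Ioo a b) :=
        norm_setIntegral_le_of_norm_le_const measure_Ioo_lt_top hpdf_le
    _ = (b - a) / √(2 * π) := by rw [Real.volume_real_Ioo_of_le hab]; ring

lemma le_gaussianReal_real_Ioo {a b : ℝ} (ha : 0 ≤ a) (hab : a ≤ b) :
    (b - a) * exp (-b ^ 2 / 2) / √(2 * π) ≤ (gaussianReal 0 1).real (Ioo a b) := by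
  have hpdf_ge : ∀ x ∈ Ioo a b, exp (-b ^ 2 / 2) / √(2 * π) ≤ gaussianPDFReal 0 1 x :=
    fun x hx => by
      rw [gaussianPDFReal_zero_one]
      gcongr
      exacts [ha.trans hx.1.le, hx.2.le]
  calc (b - a) * exp (-b ^ 2 / 2) / √(2 * π)
      = exp (-b ^ 2 / 2) / √(2 * π) * volume.real (Ioo a b) := by
        rw [Real.volume_real_Ioo_of_le hab]; ring
    _ ≤ ∫ x in Ioo a b, gaussianPDFReal 0 1 x :=
        setIntegral_ge_of_const_le_real measurableSet_Ioo measure_Ioo_lt_top.ne hpdf_ge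
          (integrable_gaussianPDFReal 0 1).integrableOn
    _ = (gaussianReal 0 1).real (Ioo a b) := (gaussianReal_real_eq_setIntegral _).symm

lemma hasLaw_of_map_eq {Ω 𝓧 : Type*} [MeasurableSpace Ω] [MeasurableSpace 𝓧] {μ : Measure Ω}
    {ν : Measure 𝓧} [NeZero ν] {X : Ω → 𝓧} (h : μ.map X = ν) : HasLaw X ν μ :=
  ⟨aemeasurable_of_map_neZero (h ▸ inferInstance), h⟩

section KolmogorovDistance

variable {Ω : Type*} [MeasurableSpace Ω] {μ : Measure Ω} [IsFiniteMeasure μ]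

lemma abs_sub_le_dK (X Y : Ω → ℝ) (t : ℝ) :
    |μ.real {ω | X ω ≤ t} - μ.real {ω | Y ω ≤ t}| ≤ dK μ X Y := by
  refine le_ciSup (f := fun t => |μ.real {ω | X ω ≤ t} - μ.real {ω | Y ω ≤ t}|)
    ⟨μ.real univ, ?_⟩ t
  rintro _ ⟨s, rfl⟩
  exact abs_sub_le_of_nonneg_of_le measureReal_nonneg (measureReal_mono (subset_univ _))
    measureReal_nonneg (measureReal_mono (subset_univ _))

lemma measureReal_Ioo_le_dK_of_add_nonpos {ν : Measure ℝ} {X N Y : Ω → ℝ}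
    (hX : HasLaw X ν μ) (hN : HasLaw N ν μ) {ε : ℝ} (hε : 0 < ε)
    (hY : ∀ ω, X ω < ε → X ω + Y ω ≤ 0) :
    μ.real {ω | X ω ∈ Ioo 0 ε} ≤ dK μ (fun ω => X ω + Y ω) N := by
  have hsplit : {ω | X ω < ε} = {ω | X ω ≤ 0} ∪ {ω | X ω ∈ Ioo 0 ε} := by
    ext ω
    simp only [mem_ofPred_eq, mem_union, mem_Ioo]
    grind
  have hI : NullMeasurableSet {ω | X ω ∈ Ioo 0 ε} μ :=
    hX.aemeasurable.nullMeasurable measurableSet_Ioo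
  have hdisj : Disjoint {ω | X ω ≤ 0} {ω | X ω ∈ Ioo 0 ε} :=
    Set.disjoint_left.mpr fun ω h0 hω => (not_lt.mpr h0) hω.1
  have hsame_cdf : μ.real {ω | N ω ≤ 0} = μ.real {ω | X ω ≤ 0} := by
    rw [hN.measureReal_eq (p := (· ≤ 0)) measurableSet_Iic,
      hX.measureReal_eq (p := (· ≤ 0)) measurableSet_Iic]
  calc μ.real {ω | X ω ∈ Ioo 0 ε}
      = μ.real {ω | X ω < ε} - μ.real {ω | N ω ≤ 0} := by
        rw [hsplit, measureReal_union₀ hI hdisj.aedisjoint, hsame_cdf]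
        ring
    _ ≤ μ.real {ω | X ω + Y ω ≤ 0} - μ.real {ω | N ω ≤ 0} :=
        sub_le_sub_right (measureReal_mono fun ω => hY ω) _
    _ ≤ dK μ (fun ω => X ω + Y ω) N := (le_abs_self _).trans (abs_sub_le_dK _ _ 0)

end KolmogorovDistance

lemma add_neg_indicator_add_indicator_nonpos {Ω : Type*} {X : Ω → ℝ} {ε δ : ℝ} {ω : Ω}
    (h : X ω < ε) :
    X ω + ((-ε) * {ω | X ω ∈ Ioo 0 ε}.indicator (fun _ => (1 : ℝ)) ω
      + ε * {ω | X ω ∈ Ioo (-ε - δ) (-ε)}.indicator (fun _ => (1 : ℝ)) ω) ≤ 0 := by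
  simp only [indicator_apply, mem_Ioo]
  split_ifs <;> grind

lemma sqrt_two_div_pi_eq_two_div_sqrt_two_mul_pi : √(2 / π) = 2 / √(2 * π) := by
  rw [eq_div_iff (by positivity), ← sqrt_mul (by positivity),
    show 2 / π * (2 * π) = 2 ^ 2 by field_simp, sqrt_sq zero_le_two]

lemma sqrt_two_div_pi_mul_pow_three (x : ℝ) :
    √(2 / π) * x ^ 3 = 4 * π * (x / √(2 * π)) ^ 3 := by
  have hs : √(2 * π) ^ 2 = 2 * π := sq_sqrt (by positivity)
  rw [sqrt_two_div_pi_eq_two_div_sqrt_two_mul_pi, div_pow, pow_succ (√(2 * π)), hs]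
  field_simp
  ring

lemma rpow_one_div_le_of_le_mul_pow {n : ℕ} (hn : n ≠ 0) {V c x : ℝ} (hV : 0 ≤ V)
    (hc : 0 ≤ c) (hx : 0 ≤ x) (h : V ≤ c * x ^ n) :
    V ^ (1 / (n : ℝ)) ≤ c ^ (1 / (n : ℝ)) * x :=
  calc V ^ (1 / (n : ℝ)) ≤ (c * x ^ n) ^ (1 / (n : ℝ)) := rpow_le_rpow hV h (by positivity)
    _ = c ^ (1 / (n : ℝ)) * x := by
        rw [mul_rpow hc (by positivity), one_div, pow_rpow_inv_natCast hx hn]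

lemma two_mul_sq_mul_le_sqrt_two_div_pi_mul_pow_three {ε p : ℝ} (hp : p ≤ ε / √(2 * π)) : 2 * ε ^ 2 * p ≤ √(2 / π) * ε ^ 3 :=
  calc 2 * ε ^ 2 * p ≤ 2 * ε ^ 2 * (ε / √(2 * π)) := by gcongr
    _ = √(2 / π) * ε ^ 3 := by rw [sqrt_two_div_pi_eq_two_div_sqrt_two_mul_pi]; ring

lemma rpow_one_div_three_le_of_le_sqrt_two_div_pi_mul_pow_three {V ε : ℝ} (hV : 0 ≤ V)
    (hε : 0 ≤ ε) (h : V ≤ √(2 / π) * ε ^ 3) :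
    V ^ ((1 : ℝ) / 3) ≤ (4 * π) ^ ((1 : ℝ) / 3) * (ε / √(2 * π)) := by
  simpa using rpow_one_div_le_of_le_mul_pow three_ne_zero hV (by positivity) (by positivity)
    (h.trans_eq (sqrt_two_div_pi_mul_pow_three ε))

theorem kolmogorov_cube_root_rate_optimal_general
    {Ω : Type*} [MeasurableSpace Ω] (μ : Measure Ω) [IsProbabilityMeasure μ]
    (X N : Ω → ℝ)
    (hX : Measure.map X μ = gaussianReal 0 1)
    (hN : Measure.map N μ = gaussianReal 0 1)
    (ε δ : ℝ) (hε : 0 < ε)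
    (hbal : μ {ω | X ω ∈ Set.Ioo 0 ε} = μ {ω | X ω ∈ Set.Ioo (-ε - δ) (-ε)})
    (Y : Ω → ℝ)
    (hY : Y = fun ω =>
      (-ε) * {ω | X ω ∈ Set.Ioo 0 ε}.indicator (fun _ => (1 : ℝ)) ω
        + ε * {ω | X ω ∈ Set.Ioo (-ε - δ) (-ε)}.indicator (fun _ => (1 : ℝ)) ω) :
    (∫ ω, Y ω ∂μ = 0)
    ∧ variance Y μ = 2 * ε ^ 2 * (μ {ω | X ω ∈ Set.Ioo 0 ε}).toReal
    ∧ variance Y μ ≤ Real.sqrt (2 / Real.pi) * ε ^ 3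
    ∧ dK μ (fun ω => X ω + Y ω) N ≥ (μ {ω | X ω ∈ Set.Ioo 0 ε}).toReal
    ∧ (μ {ω | X ω ∈ Set.Ioo 0 ε}).toReal
        ≥ ε * Real.exp (-ε ^ 2 / 2) / Real.sqrt (2 * Real.pi)
    ∧ ε * Real.exp (-ε ^ 2 / 2) / Real.sqrt (2 * Real.pi)
        ≥ (Real.exp (-ε ^ 2 / 2) / (4 * Real.pi) ^ ((1 : ℝ) / 3))
          * (variance Y μ) ^ ((1 : ℝ) / 3) := by
  subst hY
  have hXlaw := hasLaw_of_map_eq hX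
  have hA : NullMeasurableSet {ω | X ω ∈ Ioo 0 ε} μ :=
    hXlaw.aemeasurable.nullMeasurable measurableSet_Ioo
  have hB : NullMeasurableSet {ω | X ω ∈ Ioo (-ε - δ) (-ε)} μ :=
    hXlaw.aemeasurable.nullMeasurable measurableSet_Ioo
  have hAB : Disjoint {ω | X ω ∈ Ioo 0 ε} {ω | X ω ∈ Ioo (-ε - δ) (-ε)} :=
    Set.disjoint_left.mpr fun ω hωA hωB => by linarith [hωA.1, hωB.2]
  have hp : μ.real {ω | X ω ∈ Ioo 0 ε} = (gaussianReal 0 1).real (Ioo 0 ε) :=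
    hXlaw.measureReal_eq measurableSet_Ioo
  have hp_le : μ.real {ω | X ω ∈ Ioo 0 ε} ≤ ε / √(2 * π) := by
    rw [hp]
    simpa using gaussianReal_real_Ioo_le hε.le
  have hvar := variance_neg_indicator_add_indicator ε hA hB hAB hbal
  have hvar_le := hvar.trans_le (two_mul_sq_mul_le_sqrt_two_div_pi_mul_pow_three hp_le)
  refine ⟨integral_neg_indicator_add_indicator ε hA hB hbal, hvar, hvar_le,
    measureReal_Ioo_le_dK_of_add_nonpos hXlaw (hasLaw_of_map_eq hN) hε
      fun ω => add_neg_indicator_add_indicator_nonpos, ?_, ?_⟩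
  · rw [ge_iff_le, ← measureReal_def, hp]
    simpa using le_gaussianReal_real_Ioo le_rfl hε.le
  · calc _ ≤ exp (-ε ^ 2 / 2) / (4 * π) ^ ((1 : ℝ) / 3)
          * ((4 * π) ^ ((1 : ℝ) / 3) * (ε / √(2 * π))) := by
          gcongr
          exact rpow_one_div_three_le_of_le_sqrt_two_div_pi_mul_pow_three
            (variance_nonneg _ _) hε.le hvar_le
      _ = _ := by field_simp

theorem kolmogorov_cube_root_rate_optimal
    {Ω : Type*} [MeasurableSpace Ω] (μ : Measure Ω) [IsProbabilityMeasure μ]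
    (X N : Ω → ℝ)
    (hX : Measure.map X μ = gaussianReal 0 1)
    (hN : Measure.map N μ = gaussianReal 0 1)
    (ε δ : ℝ) (hε : 0 < ε) (hδ : 0 < δ)
    (hbal : μ {ω | X ω ∈ Set.Ioo 0 ε} = μ {ω | X ω ∈ Set.Ioo (-ε - δ) (-ε)})
    (Y : Ω → ℝ)
    (hY : Y = fun ω =>
      (-ε) * {ω | X ω ∈ Set.Ioo 0 ε}.indicator (fun _ => (1 : ℝ)) ω
        + ε * {ω | X ω ∈ Set.Ioo (-ε - δ) (-ε)}.indicator (fun _ => (1 : ℝ)) ω) :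
    (∫ ω, Y ω ∂μ = 0)
    ∧ variance Y μ = 2 * ε ^ 2 * (μ {ω | X ω ∈ Set.Ioo 0 ε}).toReal
    ∧ variance Y μ ≤ Real.sqrt (2 / Real.pi) * ε ^ 3
    ∧ dK μ (fun ω => X ω + Y ω) N ≥ (μ {ω | X ω ∈ Set.Ioo 0 ε}).toReal
    ∧ (μ {ω | X ω ∈ Set.Ioo 0 ε}).toReal
        ≥ ε * Real.exp (-ε ^ 2 / 2) / Real.sqrt (2 * Real.pi)
    ∧ ε * Real.exp (-ε ^ 2 / 2) / Real.sqrt (2 * Real.pi)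
        ≥ (Real.exp (-ε ^ 2 / 2) / (4 * Real.pi) ^ ((1 : ℝ) / 3))
          * (variance Y μ) ^ ((1 : ℝ) / 3) :=
  kolmogorov_cube_root_rate_optimal_general μ X N hX hN ε δ hε hbal Y hY
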